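/- (Theorem 2, lower bound) Let x and y be probability vectors with the same number of entries, with all entries of y positive. Then for every integer p ≥ 1, the Vidal conversion probability satisfies P(x^{⊗p} → y^{⊗p}) ≥ (P(x → y))^p. -/

import Mathlib

open Finset

/-- Sum of the `l` largest entries of `x` (maximum over subsets of size `l`),
counted with multiplicity: this is `S_l(x)` from the paper. -/
noncomputable def topSum {ι : Type*} [Fintype ι] (x : ι → ℝ) (l : ℕ) : ℝ :=
  sSup {s : ℝ | ∃ A : Finset ι, A.card = l ∧ s = ∑ i ∈ A, x i}

/-- Sum of the `l` smallest entries of `x` (minimum over subsets of size `l`). -/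
noncomputable def botSum {ι : Type*} [Fintype ι] (x : ι → ℝ) (l : ℕ) : ℝ :=
  sInf {s : ℝ | ∃ A : Finset ι, A.card = l ∧ s = ∑ i ∈ A, x i}

/-- `x` is majorized by `y` (written `x ≺ y`): for every `1 ≤ l ≤ N`,
the sum of the `l` largest entries of `x` is at most that of `y`. -/
def Majorized {ι : Type*} [Fintype ι] (x y : ι → ℝ) : Prop :=
  ∀ l : ℕ, 1 ≤ l → l ≤ Fintype.card ι → topSum x l ≤ topSum y l

/-- Tensor product of two vectors: all pairwise products of entries. -/
def tensor {ι κ : Type*} (x : ι → ℝ) (z : κ → ℝ) : ι × κ → ℝ :=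
  fun p => x p.1 * z p.2

/-- `p`-fold tensor power of a vector. -/
def tensorPow {ι : Type*} (x : ι → ℝ) (p : ℕ) : (Fin p → ι) → ℝ :=
  fun f => ∏ j, x (f j)

/-- Sum of the first `l` entries of a vector `x : Fin n → ℝ`. -/
def prefixSum {n : ℕ} (x : Fin n → ℝ) (l : ℕ) : ℝ :=
  ∑ j ∈ Finset.univ.filter (fun j : Fin n => (j : ℕ) < l), x j

/-- Sum of the entries of `x : Fin n → ℝ` from index `l` (0-based) on. -/
def suffixSum {n : ℕ} (x : Fin n → ℝ) (l : ℕ) : ℝ :=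
  ∑ j ∈ Finset.univ.filter (fun j : Fin n => l ≤ (j : ℕ)), x j

/-- `E_l(x) = 1 - S_{l-1}(x)`: the sum of the entries of the probability vector `x`
from the `l`-th largest to the smallest. -/
noncomputable def Evec {ι : Type*} [Fintype ι] (x : ι → ℝ) (l : ℕ) : ℝ :=
  1 - topSum x (l - 1)

/-- Vidal conversion probability `P(x → y) = min_{1 ≤ l ≤ N} E_l(x)/E_l(y)`. -/
noncomputable def vidalP {ι : Type*} [Fintype ι] (x y : ι → ℝ) : ℝ :=
  sInf {r : ℝ | ∃ l : ℕ, 1 ≤ l ∧ l ≤ Fintype.card ι ∧ r = Evec x l / Evec y l}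

/-- Nonincreasing rearrangement of the entries of `x`, as a list. -/
noncomputable def sortedDesc {ι : Type*} [Fintype ι] (x : ι → ℝ) : List ℝ :=
  ((Finset.univ.val.map x).sort (· ≤ ·)).reverse

section Aux

open Finset

variable {ι : Type*} [Fintype ι]

lemma topSumSet_finite (x : ι → ℝ) (l : ℕ) :
    {s : ℝ | ∃ A : Finset ι, A.card = l ∧ s = ∑ i ∈ A, x i}.Finite := by
  apply Set.Finite.subset (Set.finite_range (fun A : Finset ι => ∑ i ∈ A, x i))
  rintro s ⟨A, -, rfl⟩; exact ⟨A, rfl⟩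

lemma le_topSum (x : ι → ℝ) {l : ℕ} {A : Finset ι} (hA : A.card = l) :
    ∑ i ∈ A, x i ≤ topSum x l :=
  le_csSup (topSumSet_finite x l).bddAbove ⟨A, hA, rfl⟩

lemma topSum_exists (x : ι → ℝ) {l : ℕ} (hl : l ≤ Fintype.card ι) :
    ∃ A : Finset ι, A.card = l ∧ topSum x l = ∑ i ∈ A, x i := by
  obtain ⟨A, -, hA⟩ := Finset.exists_subset_card_eq (s := (Finset.univ : Finset ι)) (n := l)
    (by simpa using hl)
  have hne : {s : ℝ | ∃ A : Finset ι, A.card = l ∧ s = ∑ i ∈ A, x i}.Nonempty :=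
    ⟨_, A, hA, rfl⟩
  obtain ⟨B, hB, hBs⟩ := hne.csSup_mem (topSumSet_finite x l)
  exact ⟨B, hB, hBs⟩

lemma topSum_le (x : ι → ℝ) {l : ℕ} (hl : l ≤ Fintype.card ι) {c : ℝ}
    (h : ∀ A : Finset ι, A.card = l → ∑ i ∈ A, x i ≤ c) : topSum x l ≤ c := by
  obtain ⟨A, -, hA⟩ := Finset.exists_subset_card_eq (s := (Finset.univ : Finset ι)) (n := l) (by simpa using hl)
  refine csSup_le ⟨_, A, hA, rfl⟩ ?_
  rintro s ⟨B, hB, rfl⟩; exact h B hB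

lemma topSum_zero (x : ι → ℝ) : topSum x 0 = 0 := by
  have : {s : ℝ | ∃ A : Finset ι, A.card = 0 ∧ s = ∑ i ∈ A, x i} = {0} := by
    ext s
    constructor
    · rintro ⟨A, hA, rfl⟩
      simp [Finset.card_eq_zero.mp hA]
    · rintro rfl
      exact ⟨∅, by simp⟩
  rw [topSum, this, csSup_singleton]

lemma topSum_nonneg {x : ι → ℝ} (hx : ∀ i, 0 ≤ x i) {l : ℕ} (hl : l ≤ Fintype.card ι) :
    0 ≤ topSum x l := by
  obtain ⟨A, -, hA⟩ := Finset.exists_subset_card_eq (s := (Finset.univ : Finset ι)) (n := l) (by simpa using hl)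
  exact le_trans (Finset.sum_nonneg fun i _ => hx i) (le_topSum x hA)

lemma topSum_le_one {x : ι → ℝ} (hx : ∀ i, 0 ≤ x i) (hx1 : ∑ i, x i = 1)
    {l : ℕ} (hl : l ≤ Fintype.card ι) : topSum x l ≤ 1 := by
  refine topSum_le x hl ?_
  intro A _
  calc ∑ i ∈ A, x i ≤ ∑ i, x i :=
        Finset.sum_le_sum_of_subset_of_nonneg (Finset.subset_univ A) (fun i _ _ => hx i)
    _ = 1 := hx1

lemma topSum_lt_one {y : ι → ℝ} (hy : ∀ i, 0 < y i) (hy1 : ∑ i, y i = 1)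
    {l : ℕ} (hl : l < Fintype.card ι) : topSum y l < 1 := by
  classical
  obtain ⟨A, hA, hs⟩ := topSum_exists y hl.le
  rw [hs, ← hy1]
  have : A.card < (Finset.univ : Finset ι).card := by simpa [hA] using hl
  have hne : (Finset.univ \ A).Nonempty := by
    rw [← Finset.card_pos, Finset.card_sdiff_of_subset (Finset.subset_univ A)]
    omega
  obtain ⟨i, hi⟩ := hne
  rw [Finset.mem_sdiff] at hi
  exact Finset.sum_lt_sum_of_subset (Finset.subset_univ A) (Finset.mem_univ i) hi.2 (hy i)
    (fun j _ _ => (hy j).le)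

lemma topSum_relabel {κ : Type*} [Fintype κ] (x : ι → ℝ) (e : κ ≃ ι) (l : ℕ) :
    topSum (x ∘ e) l = topSum x l := by
  unfold topSum
  congr 1
  ext s
  constructor
  · rintro ⟨A, hA, rfl⟩
    exact ⟨A.map e.toEmbedding, by simp [hA], by simp [Finset.sum_map]⟩
  · rintro ⟨B, hB, rfl⟩
    refine ⟨B.map e.symm.toEmbedding, by simp [hB], ?_⟩
    rw [Finset.sum_map]
    simp

lemma Evec_relabel {κ : Type*} [Fintype κ] (x : ι → ℝ) (e : κ ≃ ι) (l : ℕ) :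
    Evec (x ∘ e) l = Evec x l := by
  simp [Evec, topSum_relabel]

lemma Evec_pos {y : ι → ℝ} (hy : ∀ i, 0 < y i) (hy1 : ∑ i, y i = 1)
    {l : ℕ} (hl1 : 1 ≤ l) (hl2 : l ≤ Fintype.card ι) : 0 < Evec y l := by
  have : topSum y (l - 1) < 1 := topSum_lt_one hy hy1 (by omega)
  simp only [Evec]; linarith

lemma Evec_nonneg {x : ι → ℝ} (hx : ∀ i, 0 ≤ x i) (hx1 : ∑ i, x i = 1)
    {l : ℕ} (hl2 : l ≤ Fintype.card ι) : 0 ≤ Evec x l := by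
  have : topSum x (l - 1) ≤ 1 := topSum_le_one hx hx1 (by omega)
  simp only [Evec]; linarith

lemma topSum_decomp {x y g : ι → ℝ} {c : ℝ} (hc : 0 ≤ c) (hg : ∀ i, 0 ≤ g i)
    (hdec : ∀ i, x i = c * y i + g i) {l : ℕ} (hl : l ≤ Fintype.card ι) :
    topSum x l ≤ c * topSum y l + ∑ i, g i := by
  refine topSum_le x hl ?_
  intro A hA
  have h1 : ∑ i ∈ A, x i = c * ∑ i ∈ A, y i + ∑ i ∈ A, g i := by
    simp only [hdec, Finset.sum_add_distrib, Finset.mul_sum]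
  have h2 : ∑ i ∈ A, y i ≤ topSum y l := le_topSum y hA
  have h3 : ∑ i ∈ A, g i ≤ ∑ i, g i :=
    Finset.sum_le_sum_of_subset_of_nonneg (Finset.subset_univ A) (fun i _ _ => hg i)
  nlinarith

lemma exists_topset_mem (y : ι → ℝ) (i₀ : ι) (hmax : ∀ i, y i ≤ y i₀)
    {m : ℕ} (hm1 : 1 ≤ m) (hm2 : m ≤ Fintype.card ι) :
    ∃ A : Finset ι, A.card = m ∧ i₀ ∈ A ∧ ∑ i ∈ A, y i = topSum y m := by
  classical
  obtain ⟨A, hA, hs⟩ := topSum_exists y hm2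
  by_cases hmem : i₀ ∈ A
  · exact ⟨A, hA, hmem, hs.symm⟩
  · have hAne : A.Nonempty := Finset.card_pos.mp (by omega)
    obtain ⟨a, ha⟩ := hAne
    refine ⟨insert i₀ (A.erase a), ?_, Finset.mem_insert_self _ _, ?_⟩
    · rw [Finset.card_insert_of_notMem (fun h => hmem (Finset.mem_of_mem_erase h)),
        Finset.card_erase_of_mem ha]
      omega
    · have hsum : ∑ i ∈ insert i₀ (A.erase a), y i
          = y i₀ + (∑ i ∈ A, y i - y a) := by
        rw [Finset.sum_insert (fun h => hmem (Finset.mem_of_mem_erase h)),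
          Finset.sum_erase_eq_sub ha]
      have hle : ∑ i ∈ insert i₀ (A.erase a), y i ≤ topSum y m := by
        apply le_topSum
        rw [Finset.card_insert_of_notMem (fun h => hmem (Finset.mem_of_mem_erase h)),
          Finset.card_erase_of_mem ha]
        omega
      have hge : topSum y m ≤ ∑ i ∈ insert i₀ (A.erase a), y i := by
        rw [hsum, hs]
        have := hmax a
        linarith
      linarith

lemma topSum_tensor_le {κ : Type*} [Fintype κ] (a b : ι → ℝ) (c : κ → ℝ)
    (hc : ∀ k, 0 ≤ c k)
    (hab : ∀ m, m ≤ Fintype.card ι → topSum a m ≤ topSum b m)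
    {K : ℕ} (hK : K ≤ Fintype.card (ι × κ)) :
    topSum (tensor a c) K ≤ topSum (tensor b c) K := by
  classical
  refine topSum_le _ hK ?_
  intro A hA
  set F : κ → Finset ι := fun k => (A.filter (fun p => p.2 = k)).image Prod.fst with hF
  have hinj : ∀ k : κ, ∀ p ∈ A.filter (fun p => p.2 = k), ∀ q ∈ A.filter (fun p => p.2 = k),
      p.1 = q.1 → p = q := by
    intro k p hp q hq hpq
    have h1 := (Finset.mem_filter.mp hp).2
    have h2 := (Finset.mem_filter.mp hq).2
    exact Prod.ext hpq (h1.trans h2.symm)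
  have hFcard : ∀ k, (F k).card = (A.filter (fun p => p.2 = k)).card := fun k =>
    Finset.card_image_of_injOn (fun p hp q hq => hinj k p hp q hq)
  choose B hB1 hB2 using fun k : κ =>
    topSum_exists b (l := (F k).card) ((Finset.card_le_univ (F k)).trans_eq (Finset.card_univ))
  -- rewrite the sum over A fiberwise
  have step1 : ∑ p ∈ A, tensor a c p = ∑ k, (∑ i ∈ F k, a i) * c k := by
    rw [← Finset.sum_fiberwise A (fun p => p.2) (tensor a c)]
    refine Finset.sum_congr rfl ?_
    intro k _
    rw [Finset.sum_image (fun p hp q hq hpq => hinj k p hp q hq hpq), Finset.sum_mul]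
    refine Finset.sum_congr rfl ?_
    intro p hp
    have : p.2 = k := (Finset.mem_filter.mp hp).2
    simp [tensor, this]
  have step2 : ∀ k, (∑ i ∈ F k, a i) * c k ≤ (∑ i ∈ B k, b i) * c k := by
    intro k
    refine mul_le_mul_of_nonneg_right ?_ (hc k)
    calc ∑ i ∈ F k, a i ≤ topSum a (F k).card := le_topSum a rfl
      _ ≤ topSum b (F k).card :=
          hab _ ((Finset.card_le_univ (F k)).trans_eq (Finset.card_univ))
      _ = ∑ i ∈ B k, b i := hB2 k
  set A' : Finset (ι × κ) :=
    Finset.univ.biUnion (fun k => (B k).image (fun i => (i, k))) with hA'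
  have hdisj : ∀ k1 ∈ (Finset.univ : Finset κ), ∀ k2 ∈ Finset.univ, k1 ≠ k2 →
      Disjoint ((B k1).image (fun i => (i, k1))) ((B k2).image (fun i => (i, k2))) := by
    intro k1 _ k2 _ hne
    rw [Finset.disjoint_left]
    rintro p hp1 hp2
    simp only [Finset.mem_image] at hp1 hp2
    obtain ⟨i1, -, rfl⟩ := hp1
    obtain ⟨i2, -, h2⟩ := hp2
    exact hne ((congrArg Prod.snd h2).symm)
  have hA'card : A'.card = K := by
    rw [hA', Finset.card_biUnion hdisj]
    have : ∀ k, ((B k).image (fun i => (i, k))).card = (A.filter (fun p => p.2 = k)).card := by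
      intro k
      rw [Finset.card_image_of_injective _ (fun i j h => (Prod.ext_iff.mp h).1), hB1 k, hFcard k]
    rw [Finset.sum_congr rfl (fun k _ => this k)]
    rw [← Finset.card_eq_sum_card_fiberwise (f := fun p : ι × κ => p.2) (s := A)
      (t := Finset.univ) (fun p _ => Finset.mem_univ p.2), hA]
  have step3 : ∑ k, (∑ i ∈ B k, b i) * c k = ∑ p ∈ A', tensor b c p := by
    rw [hA', Finset.sum_biUnion hdisj]
    refine Finset.sum_congr rfl ?_
    intro k _
    rw [Finset.sum_image (fun i _ j _ h => (Prod.ext_iff.mp h).1), Finset.sum_mul]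
    rfl
  calc ∑ p ∈ A, tensor a c p = ∑ k, (∑ i ∈ F k, a i) * c k := step1
    _ ≤ ∑ k, (∑ i ∈ B k, b i) * c k := Finset.sum_le_sum (fun k _ => step2 k)
    _ = ∑ p ∈ A', tensor b c p := step3
    _ ≤ topSum (tensor b c) K := le_topSum _ hA'card

lemma topSum_tensor_comm {κ : Type*} [Fintype κ] (a : ι → ℝ) (c : κ → ℝ) (K : ℕ) :
    topSum (tensor a c) K = topSum (tensor c a) K := by
  have : tensor a c = (tensor c a) ∘ (Equiv.prodComm ι κ) := by
    funext p; simp [tensor, mul_comm]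
  rw [this, topSum_relabel]

/-- The key hypothesis form: `r * E_l(y) ≤ E_l(x)` for all relevant `l`. -/
def Good {ι : Type*} [Fintype ι] (x y : ι → ℝ) (r : ℝ) : Prop :=
  ∀ l : ℕ, 1 ≤ l → l ≤ Fintype.card ι → r * Evec y l ≤ Evec x l

lemma Good_relabel {κ : Type*} [Fintype κ] {x y : ι → ℝ} {r : ℝ} (e : κ ≃ ι)
    (h : Good x y r) : Good (x ∘ e) (y ∘ e) r := by
  intro l h1 h2
  rw [Evec_relabel, Evec_relabel]
  exact h l h1 (h2.trans_eq (Fintype.card_congr e))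

end Aux

section Main

open Finset

lemma univ_nonempty_of_sum_one {ι : Type*} [Fintype ι] {y : ι → ℝ} (hy1 : ∑ i, y i = 1) :
    (Finset.univ : Finset ι).Nonempty := by
  by_contra h
  rw [Finset.not_nonempty_iff_eq_empty] at h
  rw [h, Finset.sum_empty] at hy1
  norm_num at hy1

/-- The mixture vector `z = r y + (1-r) δ_{i₀}` dominates `x` in the `topSum` order. -/
lemma topSum_le_mix {ι : Type*} [Fintype ι] [DecidableEq ι] {x y : ι → ℝ} {r : ℝ}
    (hx0 : ∀ i, 0 ≤ x i) (hx1 : ∑ i, x i = 1) (hy1 : ∑ i, y i = 1)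
    (hr0 : 0 ≤ r) (hxy : Good x y r) (i₀ : ι) (hmax : ∀ i, y i ≤ y i₀) :
    ∀ m, m ≤ Fintype.card ι →
      topSum x m ≤ topSum (fun i => r * y i + (1 - r) * (if i = i₀ then 1 else 0)) m := by
  intro m hm
  set z : ι → ℝ := fun i => r * y i + (1 - r) * (if i = i₀ then 1 else 0) with hz
  rcases Nat.eq_zero_or_pos m with hm0 | hm1
  · subst hm0; rw [topSum_zero, topSum_zero]
  rcases eq_or_lt_of_le hm with hmtop | hmlt
  · -- m = card: topSum x m ≤ 1 = ∑ z ≤ topSum z m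
    have h1 : topSum x m ≤ 1 := topSum_le_one hx0 hx1 hm
    have hz1 : ∑ i, z i = 1 := by
      have : ∑ i, (if i = i₀ then (1:ℝ) else 0) = 1 := by
        rw [Finset.sum_ite_eq' Finset.univ i₀ (fun _ => (1:ℝ))]
        simp
      simp only [hz, Finset.sum_add_distrib, ← Finset.mul_sum, hy1, this]
      ring
    have h2 : ∑ i, z i ≤ topSum z m := by
      apply le_topSum
      rw [Finset.card_univ, hmtop]
    linarith
  · -- 1 ≤ m < card
    have hkey := hxy (m + 1) (by omega) (by omega)
    have hE1 : Evec x (m + 1) = 1 - topSum x m := by simp [Evec]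
    have hE2 : Evec y (m + 1) = 1 - topSum y m := by simp [Evec]
    obtain ⟨A, hAcard, hi₀A, hAsum⟩ := exists_topset_mem y i₀ hmax hm1 hm
    have hAz : ∑ i ∈ A, z i = r * topSum y m + (1 - r) := by
      have hind : ∑ i ∈ A, (if i = i₀ then (1:ℝ) else 0) = 1 := by
        rw [Finset.sum_ite_eq' A i₀ (fun _ => (1:ℝ)), if_pos hi₀A]
      simp only [hz, Finset.sum_add_distrib, ← Finset.mul_sum, hAsum, hind]
      ring
    have hle : ∑ i ∈ A, z i ≤ topSum z m := le_topSum z hAcard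
    rw [hE1, hE2] at hkey
    linarith

lemma good_tensor {ι κ : Type*} [Fintype ι] [Fintype κ]
    {x y : ι → ℝ} {u v : κ → ℝ} {r s : ℝ}
    (hx0 : ∀ i, 0 ≤ x i) (hx1 : ∑ i, x i = 1)
    (hy0 : ∀ i, 0 ≤ y i) (hy1 : ∑ i, y i = 1)
    (hu0 : ∀ k, 0 ≤ u k) (hu1 : ∑ k, u k = 1)
    (hv0 : ∀ k, 0 ≤ v k) (hv1 : ∑ k, v k = 1)
    (hr0 : 0 ≤ r) (hr1 : r ≤ 1) (hs0 : 0 ≤ s) (hs1 : s ≤ 1)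
    (hxy : Good x y r) (huv : Good u v s) :
    Good (tensor x u) (tensor y v) (r * s) := by
  classical
  obtain ⟨i₀, -, hi₀⟩ := Finset.exists_max_image Finset.univ y (univ_nonempty_of_sum_one hy1)
  obtain ⟨k₀, -, hk₀⟩ := Finset.exists_max_image Finset.univ v (univ_nonempty_of_sum_one hv1)
  set z : ι → ℝ := fun i => r * y i + (1 - r) * (if i = i₀ then 1 else 0) with hzdef
  set w : κ → ℝ := fun k => s * v k + (1 - s) * (if k = k₀ then 1 else 0) with hwdef
  have hz0 : ∀ i, 0 ≤ z i := by
    intro i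
    have : (0:ℝ) ≤ (if i = i₀ then (1:ℝ) else 0) := by positivity
    have := mul_nonneg (by linarith : (0:ℝ) ≤ 1 - r) this
    have := mul_nonneg hr0 (hy0 i)
    simp only [hzdef]; linarith
  have hw0 : ∀ k, 0 ≤ w k := by
    intro k
    have : (0:ℝ) ≤ (if k = k₀ then (1:ℝ) else 0) := by positivity
    have := mul_nonneg (by linarith : (0:ℝ) ≤ 1 - s) this
    have := mul_nonneg hs0 (hv0 k)
    simp only [hwdef]; linarith
  have hxz := topSum_le_mix hx0 hx1 hy1 hr0 hxy i₀ (fun i => hi₀ i (Finset.mem_univ i))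
  have huw := topSum_le_mix hu0 hu1 hv1 hs0 huv k₀ (fun k => hk₀ k (Finset.mem_univ k))
  have hzry : ∀ i, r * y i ≤ z i := by
    intro i
    have h := mul_nonneg (by linarith : (0:ℝ) ≤ 1 - r)
      (by positivity : (0:ℝ) ≤ (if i = i₀ then (1:ℝ) else 0))
    simp only [hzdef]
    linarith
  have hwsv : ∀ k, s * v k ≤ w k := by
    intro k
    have h := mul_nonneg (by linarith : (0:ℝ) ≤ 1 - s)
      (by positivity : (0:ℝ) ≤ (if k = k₀ then (1:ℝ) else 0))
    simp only [hwdef]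
    linarith
  have hz1 : ∑ i, z i = 1 := by
    have h1 : ∑ i, (if i = i₀ then (1:ℝ) else 0) = 1 := by
      rw [Finset.sum_ite_eq' Finset.univ i₀ (fun _ => (1:ℝ))]; simp
    simp only [hzdef, Finset.sum_add_distrib, ← Finset.mul_sum, hy1, h1]; ring
  have hw1 : ∑ k, w k = 1 := by
    have h1 : ∑ k, (if k = k₀ then (1:ℝ) else 0) = 1 := by
      rw [Finset.sum_ite_eq' Finset.univ k₀ (fun _ => (1:ℝ))]; simp
    simp only [hwdef, Finset.sum_add_distrib, ← Finset.mul_sum, hv1, h1]; ring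
  intro L hL1 hL2
  set K := L - 1 with hKdef
  have hK : K ≤ Fintype.card (ι × κ) := by omega
  have hK' : K ≤ Fintype.card (κ × ι) := by
    rw [Fintype.card_prod] at hK ⊢
    rwa [Nat.mul_comm]
  -- chain of inequalities on topSum at level K
  have t1 : topSum (tensor x u) K ≤ topSum (tensor z u) K :=
    topSum_tensor_le x z u hu0 hxz hK
  have t2 : topSum (tensor z u) K ≤ topSum (tensor z w) K := by
    rw [topSum_tensor_comm z u, topSum_tensor_comm z w]
    exact topSum_tensor_le u w z hz0 huw hK'
  have t3 : topSum (tensor z w) K ≤ (r * s) * topSum (tensor y v) K + (1 - r * s) := by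
    have hsum : ∑ p : ι × κ, (tensor z w p - (r * s) * tensor y v p) = 1 - r * s := by
      have e1 : ∑ p : ι × κ, tensor z w p = 1 := by
        rw [Fintype.sum_prod_type]
        simp only [tensor]
        rw [← Finset.sum_mul_sum, hz1, hw1]; norm_num
      have e2 : ∑ p : ι × κ, tensor y v p = 1 := by
        rw [Fintype.sum_prod_type]
        simp only [tensor]
        rw [← Finset.sum_mul_sum, hy1, hv1]; norm_num
      rw [Finset.sum_sub_distrib, e1, ← Finset.mul_sum, e2]
      ring
    have := topSum_decomp (x := tensor z w) (y := tensor y v)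
      (g := fun p => tensor z w p - (r * s) * tensor y v p)
      (c := r * s) (mul_nonneg hr0 hs0)
      (fun p => by
        have h1 : r * y p.1 ≤ z p.1 := hzry p.1
        have h2 : s * v p.2 ≤ w p.2 := hwsv p.2
        have h3 : 0 ≤ r * y p.1 := mul_nonneg hr0 (hy0 p.1)
        have h4 : 0 ≤ s * v p.2 := mul_nonneg hs0 (hv0 p.2)
        have hmul : (r * y p.1) * (s * v p.2) ≤ z p.1 * w p.2 :=
          mul_le_mul h1 h2 h4 (le_trans h3 h1)
        simp only [tensor]
        nlinarith)
      (fun p => by ring) hK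
    rw [hsum] at this
    exact this
  have hEx : Evec (tensor x u) L = 1 - topSum (tensor x u) K := by simp [Evec, hKdef]
  have hEy : Evec (tensor y v) L = 1 - topSum (tensor y v) K := by simp [Evec, hKdef]
  rw [hEx, hEy]
  nlinarith [le_trans t1 (le_trans t2 t3)]

end Main

section Final

open Finset

lemma tensorPow_sum_one {n : ℕ} {x : Fin n → ℝ} (hx1 : ∑ i, x i = 1) (p : ℕ) :
    ∑ f : Fin p → Fin n, tensorPow x p f = 1 := by
  classical
  have := Finset.prod_univ_sum (fun _ : Fin p => (Finset.univ : Finset (Fin n)))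
    (fun _ i => x i)
  rw [Fintype.piFinset_univ] at this
  simp only [hx1, Finset.prod_const_one] at this
  simp only [tensorPow]
  exact this.symm

lemma tensorPow_nonneg {n : ℕ} {x : Fin n → ℝ} (hx0 : ∀ i, 0 ≤ x i) (p : ℕ) :
    ∀ f, 0 ≤ tensorPow x p f := fun f => Finset.prod_nonneg (fun j _ => hx0 (f j))

lemma tensorPow_pos {n : ℕ} {x : Fin n → ℝ} (hx0 : ∀ i, 0 < x i) (p : ℕ) :
    ∀ f, 0 < tensorPow x p f := fun f => Finset.prod_pos (fun j _ => hx0 (f j))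

/-- The splitting equivalence for tuples. -/
def splitEquiv (p : ℕ) (α : Type*) : (Fin (p + 1) → α) ≃ α × (Fin p → α) where
  toFun f := (f 0, fun j => f j.succ)
  invFun q := Fin.cons q.1 q.2
  left_inv f := by
    funext j
    refine Fin.cases ?_ ?_ j
    · rfl
    · intro i; simp
  right_inv q := by
    refine Prod.ext rfl ?_
    funext j; simp

lemma tensorPow_succ {n : ℕ} (x : Fin n → ℝ) (p : ℕ) :
    tensorPow x (p + 1) = (tensor x (tensorPow x p)) ∘ (splitEquiv p (Fin n)) := by
  funext f
  simp only [Function.comp_apply, splitEquiv, Equiv.coe_fn_mk, tensor, tensorPow]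
  rw [Fin.prod_univ_succ]

lemma good_pow {n : ℕ} {x y : Fin n → ℝ} {r : ℝ}
    (hx0 : ∀ i, 0 ≤ x i) (hx1 : ∑ i, x i = 1)
    (hy0 : ∀ i, 0 ≤ y i) (hy1 : ∑ i, y i = 1)
    (hr0 : 0 ≤ r) (hr1 : r ≤ 1) (hxy : Good x y r) :
    ∀ p : ℕ, Good (tensorPow x p) (tensorPow y p) (r ^ p) := by
  intro p
  induction p with
  | zero =>
      intro l hl1 hl2
      have hcard : Fintype.card (Fin 0 → Fin n) = 1 := by
        simp
      have hl : l = 1 := by omega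
      subst hl
      simp [Evec, topSum_zero]
  | succ p ih =>
      have hstep : Good (tensor x (tensorPow x p)) (tensor y (tensorPow y p)) (r * r ^ p) :=
        good_tensor hx0 hx1 hy0 hy1 (tensorPow_nonneg hx0 p) (tensorPow_sum_one hx1 p)
          (tensorPow_nonneg hy0 p) (tensorPow_sum_one hy1 p)
          hr0 hr1 (pow_nonneg hr0 p) (pow_le_one₀ hr0 hr1) hxy ih
      have := Good_relabel (splitEquiv p (Fin n)) hstep
      rw [← tensorPow_succ, ← tensorPow_succ] at this
      rw [pow_succ]
      rw [mul_comm (r ^ p) r]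
      exact this

end Final

theorem stmt_10 {n : ℕ} (x y : Fin n → ℝ)
    (hx0 : ∀ i, 0 ≤ x i) (hx1 : ∑ i, x i = 1)
    (hy0 : ∀ i, 0 < y i) (hy1 : ∑ i, y i = 1) :
    ∀ p : ℕ, 1 ≤ p →
      (vidalP x y) ^ p ≤ vidalP (tensorPow x p) (tensorPow y p) := by
  intro p hp
  have hn : 0 < n := by
    by_contra h
    have hn0 : n = 0 := by omega
    subst hn0
    simp at hx1
  -- basic facts about the defining set of vidalP x y
  set T : Set ℝ := {r : ℝ | ∃ l : ℕ, 1 ≤ l ∧ l ≤ Fintype.card (Fin n) ∧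
      r = Evec x l / Evec y l} with hT
  have hTfin : T.Finite := by
    apply Set.Finite.subset ((Set.finite_Icc 1 n).image (fun l => Evec x l / Evec y l))
    rintro r ⟨l, h1, h2, rfl⟩
    exact ⟨l, ⟨h1, by simpa using h2⟩, rfl⟩
  have hone : Evec x 1 / Evec y 1 = 1 := by
    simp [Evec, topSum_zero]
  have hmem1 : (1 : ℝ) ∈ T := ⟨1, le_refl 1, by simp; omega, hone.symm⟩
  have hr1 : vidalP x y ≤ 1 := csInf_le hTfin.bddBelow hmem1
  have hTnonneg : ∀ r ∈ T, (0:ℝ) ≤ r := by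
    rintro r ⟨l, h1, h2, rfl⟩
    refine div_nonneg (Evec_nonneg hx0 hx1 h2) (Evec_pos hy0 hy1 h1 h2).le
  have hr0 : 0 ≤ vidalP x y := le_csInf ⟨1, hmem1⟩ hTnonneg
  have hxy : Good x y (vidalP x y) := by
    intro l h1 h2
    have hle : vidalP x y ≤ Evec x l / Evec y l := csInf_le hTfin.bddBelow ⟨l, h1, h2, rfl⟩
    exact (le_div_iff₀ (Evec_pos hy0 hy1 h1 h2)).mp hle
  have hgood := good_pow hx0 hx1 (fun i => (hy0 i).le) hy1 hr0 hr1 hxy p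
  -- now bound the inf defining vidalP of the tensor powers
  have hY0 : ∀ f, 0 < tensorPow y p f := tensorPow_pos hy0 p
  have hY1 : ∑ f, tensorPow y p f = 1 := tensorPow_sum_one hy1 p
  have hX0 : ∀ f, 0 ≤ tensorPow x p f := tensorPow_nonneg hx0 p
  have hX1 : ∑ f, tensorPow x p f = 1 := tensorPow_sum_one hx1 p
  have hcard : 1 ≤ Fintype.card (Fin p → Fin n) := by
    have : Nonempty (Fin p → Fin n) := ⟨fun _ => ⟨0, hn⟩⟩
    exact Fintype.card_pos
  apply le_csInf
  · exact ⟨Evec (tensorPow x p) 1 / Evec (tensorPow y p) 1, 1, le_refl 1, hcard, rfl⟩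
  · rintro b ⟨L, hL1, hL2, rfl⟩
    have hkey := hgood L hL1 hL2
    have hpos := Evec_pos hY0 hY1 hL1 hL2
    exact (le_div_iff₀ hpos).mpr hkey
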